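/- Let a₀ > 0, K > 0, D < 0, φ₀' ∈ ℝ. Define a(t) = sqrt(a₀² + t²), H(t) = a'(t)/a(t), and φ₁(t) = φ₀' + (2/(√3·K))·( −(sqrt(3a₀² + DK²)/a₀)·artanh( sqrt(3a₀² + DK²)·t/(a₀·sqrt(−DK² + 3t²)) ) + √3·log(3t + sqrt(−3DK² + 9t²)) ) and v₁(t) = (3(4t² + 3a₀²) − DK²)/(3K²(a₀² + t²)²). Assume 3a₀² + DK² > 0. Then for all t ∈ ℝ: (1) φ₁'(t)² = −(2/K²)(H'(t) − 1/a(t)²) − 4D/(3 a(t)⁴) (equation (3.4) with n = 4, k = 1), and (2) v₁(t) = (3/K²)(H(t)² + H'(t)/3 + 2/(3 a(t)²)) − D/(3 a(t)⁴) (equation (3.5) with n = 4, k = 1); consequently, with ρ_T = φ₁'²/2 + v₁ + D/a⁴ and p_T = φ₁'²/2 − v₁ + D/(3a⁴), both Einstein equations H² + 1/a² = (K²/3)ρ_T and a''/a = −(K²/6)(ρ_T + 3p_T) hold. -/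

import Mathlib

open Real

/-!
With `P = a₀² + t²` one has `H = t / P`, `H' = (a₀² - t²) / P²` and `a''/a = a₀² / P²`. The
artanh and logarithmic terms of `φ₁` are tuned so that their derivatives combine into
`φ₁' = 2 √(3 t² - D K²) / (√3 K P)`. With these closed forms (3.4) and (3.5) are rational
identities in `t`, and the Einstein equations follow from them by the algebra of Remark 2,
because `a''/a = H' + H²`.
-/

noncomputable def artanh (x : ℝ) : ℝ := Real.log ((1 + x) / (1 - x)) / 2

theorem hasDerivAt_artanh {x : ℝ} (hx : x ^ 2 < 1) :
    HasDerivAt _root_.artanh (1 - x ^ 2)⁻¹ x := by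
  have hsub : 1 - x ≠ 0 := by nlinarith
  have hadd : 1 + x ≠ 0 := by nlinarith
  have hquot : HasDerivAt (fun y => (1 + y) / (1 - y))
      ((1 * (1 - x) - (1 + x) * -1) / (1 - x) ^ 2) x :=
    ((hasDerivAt_id x).const_add 1).div ((hasDerivAt_id x).const_sub 1) hsub
  have hne : 1 - x ^ 2 ≠ 0 := by nlinarith
  refine ((hquot.log (div_ne_zero hadd hsub)).div_const 2).congr_deriv ?_
  field_simp
  ring

theorem hasDerivAt_sqrt_add_mul_sq {p q t : ℝ} (h : 0 < p + q * t ^ 2) :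
    HasDerivAt (fun x => √(p + q * x ^ 2)) (q * t / √(p + q * t ^ 2)) t := by
  have hpoly : HasDerivAt (fun x => p + q * x ^ 2) (q * (2 * t)) t := by
    simpa using ((hasDerivAt_pow 2 t).const_mul q).const_add p
  refine (hpoly.sqrt h.ne').congr_deriv ?_
  field_simp

theorem hasDerivAt_div_add_sq {c t : ℝ} (h : c + t ^ 2 ≠ 0) :
    HasDerivAt (fun x => x / (c + x ^ 2)) ((c - t ^ 2) / (c + t ^ 2) ^ 2) t := by
  have hpoly : HasDerivAt (fun x => c + x ^ 2) (2 * t) t := by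
    simpa using (hasDerivAt_pow 2 t).const_add c
  refine ((hasDerivAt_id t).div hpoly h).congr_deriv ?_
  simp only [id]
  ring

theorem hasDerivAt_div_sqrt_add_sq {c t : ℝ} (h : 0 < c + t ^ 2) :
    HasDerivAt (fun x => x / √(c + x ^ 2)) (c / √(c + t ^ 2) ^ 3) t := by
  have hsqrt := hasDerivAt_sqrt_add_mul_sq (p := c) (q := 1) (by simpa using h)
  simp only [one_mul] at hsqrt
  have hpos : 0 < √(c + t ^ 2) := sqrt_pos.2 h
  refine ((hasDerivAt_id t).div hsqrt hpos.ne').congr_deriv ?_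
  have hsq : √(c + t ^ 2) ^ 2 = c + t ^ 2 := sq_sqrt h.le
  simp only [id]
  field_simp
  linear_combination hsq

theorem hasDerivAt_log_mul_add_sqrt {p b : ℝ} (hp : 0 < p) (t : ℝ) :
    HasDerivAt (fun x => log (b * x + √(p + b ^ 2 * x ^ 2)))
      (b / √(p + b ^ 2 * t ^ 2)) t := by
  set S := √(p + b ^ 2 * t ^ 2)
  have hS2 : S ^ 2 = p + b ^ 2 * t ^ 2 := sq_sqrt (by positivity)
  have hS : 0 < S := sqrt_pos.2 (by positivity)
  have hsum : 0 < b * t + S := by nlinarith [sq_nonneg (S + b * t)]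
  have hsqrt := hasDerivAt_sqrt_add_mul_sq (p := p) (q := b ^ 2) (t := t) (by positivity)
  have hlin : HasDerivAt (fun x => b * x) b t := by
    simpa using (hasDerivAt_id t).const_mul b
  refine ((hlin.add hsqrt).log hsum.ne').congr_deriv ?_
  show (b + b ^ 2 * t / S) / (b * t + S) = b / S
  field_simp
  ring

/-- The constraint on `c` is what makes `1 - (c x / (a₀ √(p + q x²)))²` factor as
`p (a₀² + x²) / (a₀² (p + q x²))`, so that the derivative is this simple. -/
theorem hasDerivAt_artanh_mul_div_sqrt {a₀ c p q : ℝ} (ha₀ : a₀ ≠ 0) (hp : 0 < p)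
    (hc : c ^ 2 = q * a₀ ^ 2 - p) (t : ℝ) :
    HasDerivAt (fun x => _root_.artanh (c * x / (a₀ * √(p + q * x ^ 2))))
      (c * a₀ / (√(p + q * t ^ 2) * (a₀ ^ 2 + t ^ 2))) t := by
  have hq : 0 < q := by
    have : 0 < q * a₀ ^ 2 := by nlinarith [sq_nonneg c]
    exact pos_of_mul_pos_left this (sq_nonneg a₀)
  have hrad : 0 < p + q * t ^ 2 := by positivity
  have hsqrt := (hasDerivAt_sqrt_add_mul_sq hrad).const_mul a₀
  set S := √(p + q * t ^ 2)
  have hS2 : S ^ 2 = p + q * t ^ 2 := sq_sqrt hrad.le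
  have hS : 0 < S := sqrt_pos.2 hrad
  have hden : (a₀ * S) ^ 2 - (c * t) ^ 2 = p * (a₀ ^ 2 + t ^ 2) := by
    linear_combination a₀ ^ 2 * hS2 - t ^ 2 * hc
  have hu : (c * t / (a₀ * S)) ^ 2 < 1 := by
    rw [div_pow, div_lt_one (by positivity)]
    nlinarith [mul_pos hp (by positivity : 0 < a₀ ^ 2 + t ^ 2)]
  have hlin : HasDerivAt (fun x => c * x) c t := by
    simpa using (hasDerivAt_id t).const_mul c
  refine ((hasDerivAt_artanh hu).comp t (hlin.div hsqrt (by positivity))).congr_deriv ?_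
  have hne : (a₀ * S) ^ 2 - (c * t) ^ 2 ≠ 0 := by rw [hden]; positivity
  show (1 - (c * t / (a₀ * S)) ^ 2)⁻¹ *
      ((c * (a₀ * S) - c * t * (a₀ * (q * t / S))) / (a₀ * S) ^ 2)
    = c * a₀ / (S * (a₀ ^ 2 + t ^ 2))
  field_simp
  rw [div_eq_iff (by rwa [mul_pow, mul_pow] at hne)]
  linear_combination c * t ^ 2 * hS2 + c * t ^ 2 * hc

theorem hasDerivAt_ozerTaha_scalarField {a₀ K D φ₀' : ℝ} (ha₀ : a₀ ≠ 0)
    (hDK : D * K ^ 2 < 0) (hpos : 0 < 3 * a₀ ^ 2 + D * K ^ 2) (t : ℝ) :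
    HasDerivAt (fun x => φ₀' + 2 / (√3 * K) *
      (-(√(3 * a₀ ^ 2 + D * K ^ 2)) / a₀ *
        _root_.artanh (√(3 * a₀ ^ 2 + D * K ^ 2) * x /
          (a₀ * √(-(D * K ^ 2) + 3 * x ^ 2))) +
       √3 * log (3 * x + √(-(3 * D * K ^ 2) + 9 * x ^ 2))))
      (2 * √(-(D * K ^ 2) + 3 * t ^ 2) / (√3 * K * (a₀ ^ 2 + t ^ 2))) t := by
  have hc2 : √(3 * a₀ ^ 2 + D * K ^ 2) ^ 2 = 3 * a₀ ^ 2 - -(D * K ^ 2) := by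
    rw [sq_sqrt hpos.le]; ring
  have hart := hasDerivAt_artanh_mul_div_sqrt ha₀ (by linarith) hc2 t
  have hlog := hasDerivAt_log_mul_add_sqrt (p := -(3 * D * K ^ 2)) (b := 3) (by nlinarith) t
  norm_num at hlog
  set c := √(3 * a₀ ^ 2 + D * K ^ 2)
  set S := √(-(D * K ^ 2) + 3 * t ^ 2)
  have hrad : 0 < -(D * K ^ 2) + 3 * t ^ 2 := by nlinarith [sq_nonneg t]
  have hS2 : S ^ 2 = -(D * K ^ 2) + 3 * t ^ 2 := sq_sqrt hrad.le
  have hS : 0 < S := sqrt_pos.2 hrad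
  have hsqrt9 : √(-(3 * D * K ^ 2) + 9 * t ^ 2) = √3 * S := by
    rw [← sqrt_mul (by norm_num)]; ring_nf
  have hbracket := (hart.const_mul (-c / a₀)).add (hlog.const_mul √3)
  refine ((hbracket.const_mul _).const_add φ₀').congr_deriv ?_
  rw [hsqrt9]
  field_simp
  rw [hc2, hS2]
  ring

section ScaleFactor

variable {a₀ : ℝ}

theorem deriv_sqrt_sq_add_sq (ha₀ : a₀ ≠ 0) :
    deriv (fun t => √(a₀ ^ 2 + t ^ 2)) = fun t => t / √(a₀ ^ 2 + t ^ 2) := by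
  funext t
  simpa using (hasDerivAt_sqrt_add_mul_sq (p := a₀ ^ 2) (q := 1) (t := t) (by positivity)).deriv

theorem deriv_sqrt_sq_add_sq_div_self (ha₀ : a₀ ≠ 0) :
    (fun t => deriv (fun t => √(a₀ ^ 2 + t ^ 2)) t / √(a₀ ^ 2 + t ^ 2))
      = fun t => t / (a₀ ^ 2 + t ^ 2) := by
  funext t
  rw [deriv_sqrt_sq_add_sq ha₀, div_div, mul_self_sqrt (by positivity)]

theorem deriv_deriv_sqrt_sq_add_sq_div_self (ha₀ : a₀ ≠ 0) (t : ℝ) :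
    deriv (deriv (fun t => √(a₀ ^ 2 + t ^ 2))) t / √(a₀ ^ 2 + t ^ 2)
      = a₀ ^ 2 / (a₀ ^ 2 + t ^ 2) ^ 2 := by
  have hP : 0 < a₀ ^ 2 + t ^ 2 := by positivity
  rw [deriv_sqrt_sq_add_sq ha₀, (hasDerivAt_div_sqrt_add_sq hP).deriv, div_div, ← pow_succ,
    show 3 + 1 = 2 * 2 from rfl, pow_mul, sq_sqrt hP.le]

end ScaleFactor

/-- Remark 2 of the paper, pointwise in time: `h`, `h'`, `acc` stand for `H`, `H'`, `a''/a`
(related by `(a'/a)' = a''/a - (a'/a)²`), `ψ` for `φ'²`, and the matter has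
`ρ_m = D/aⁿ`, `p_m = (n - 3) D / (3 aⁿ)`. -/
theorem einstein_equations_of_field_equations {K k D a h h' acc ψ v : ℝ} (n : ℕ)
    (hK : K ≠ 0) (hacc : acc = h' + h ^ 2)
    (hψ : ψ = -(2 / K ^ 2) * (h' - k / a ^ 2) - n * D / (3 * a ^ n))
    (hv : v = 3 / K ^ 2 * (h ^ 2 + h' / 3 + 2 * k / (3 * a ^ 2)) + (n - 6) * D / (6 * a ^ n)) :
    h ^ 2 + k / a ^ 2 = K ^ 2 / 3 * (ψ / 2 + v + D / a ^ n) ∧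
      acc = -(K ^ 2 / 6) *
        ((ψ / 2 + v + D / a ^ n) + 3 * (ψ / 2 - v + (n - 3) * D / (3 * a ^ n))) := by
  subst hacc hψ hv
  constructor <;> field_simp <;> ring

/-- The D ≠ 0 extension of the Özer–Taha solution with
a(t) = √(a₀² + t²): the scalar field (4.1) and potential (4.2) satisfy
equations (3.4) and (3.5) with n = 4, k = 1, and consequently both Einstein
equations. -/
theorem ozer_taha_nonzero_D
    (a₀ K D φ₀' : ℝ) (ha₀ : 0 < a₀) (hK : 0 < K) (hD : D < 0)
    (hpos : 0 < 3 * a₀ ^ 2 + D * K ^ 2)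
    (a H φ₁ v₁ ρT pT : ℝ → ℝ)
    (ha : a = fun t => Real.sqrt (a₀ ^ 2 + t ^ 2))
    (hH : H = fun t => deriv a t / a t)
    (hφ₁ : φ₁ = fun t => φ₀' + 2 / (Real.sqrt 3 * K) *
      (-(Real.sqrt (3 * a₀ ^ 2 + D * K ^ 2)) / a₀ *
        _root_.artanh (Real.sqrt (3 * a₀ ^ 2 + D * K ^ 2) * t /
          (a₀ * Real.sqrt (-(D * K ^ 2) + 3 * t ^ 2))) +
       Real.sqrt 3 * Real.log (3 * t + Real.sqrt (-(3 * D * K ^ 2) + 9 * t ^ 2))))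
    (hv₁ : v₁ = fun t => (3 * (4 * t ^ 2 + 3 * a₀ ^ 2) - D * K ^ 2) /
      (3 * K ^ 2 * (a₀ ^ 2 + t ^ 2) ^ 2))
    (hρ : ρT = fun t => (deriv φ₁ t) ^ 2 / 2 + v₁ t + D / a t ^ 4)
    (hp : pT = fun t => (deriv φ₁ t) ^ 2 / 2 - v₁ t + D / (3 * a t ^ 4)) :
    ∀ t : ℝ,
      (deriv φ₁ t) ^ 2
        = -(2 / K ^ 2) * (deriv H t - 1 / a t ^ 2) - 4 * D / (3 * a t ^ 4) ∧
      v₁ t = 3 / K ^ 2 * (H t ^ 2 + deriv H t / 3 + 2 / (3 * a t ^ 2))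
        - D / (3 * a t ^ 4) ∧
      H t ^ 2 + 1 / a t ^ 2 = K ^ 2 / 3 * ρT t ∧
      deriv (deriv a) t / a t = -(K ^ 2 / 6) * (ρT t + 3 * pT t) := by
  intro t
  have hP : 0 < a₀ ^ 2 + t ^ 2 := by positivity
  have hHx : H = fun x => x / (a₀ ^ 2 + x ^ 2) := by
    simp only [hH, ha]; exact deriv_sqrt_sq_add_sq_div_self ha₀.ne'
  have hH' : deriv H t = (a₀ ^ 2 - t ^ 2) / (a₀ ^ 2 + t ^ 2) ^ 2 := by
    rw [hHx]; exact (hasDerivAt_div_add_sq hP.ne').deriv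
  have hacc : deriv (deriv a) t / a t = deriv H t + H t ^ 2 := by
    simp only [ha]
    rw [deriv_deriv_sqrt_sq_add_sq_div_self ha₀.ne', hH', hHx]
    field_simp
    ring
  have hat2 : a t ^ 2 = a₀ ^ 2 + t ^ 2 := by rw [ha, sq_sqrt hP.le]
  have hat4 : a t ^ 4 = (a₀ ^ 2 + t ^ 2) ^ 2 := by rw [← hat2]; ring
  have hφ' : deriv φ₁ t ^ 2
      = 4 * (-(D * K ^ 2) + 3 * t ^ 2) / (3 * K ^ 2 * (a₀ ^ 2 + t ^ 2) ^ 2) := by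
    have hDK : D * K ^ 2 < 0 := mul_neg_of_neg_of_pos hD (by positivity)
    rw [hφ₁, (hasDerivAt_ozerTaha_scalarField ha₀.ne' hDK hpos t).deriv]
    simp only [div_pow, mul_pow]
    rw [sq_sqrt (by nlinarith [sq_nonneg t]), sq_sqrt (by norm_num)]
    ring
  have h34 : deriv φ₁ t ^ 2
      = -(2 / K ^ 2) * (deriv H t - 1 / a t ^ 2) - 4 * D / (3 * a t ^ 4) := by
    rw [hφ', hH', hat2, hat4]; field_simp; ring
  have h35 : v₁ t = 3 / K ^ 2 * (H t ^ 2 + deriv H t / 3 + 2 / (3 * a t ^ 2))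
      - D / (3 * a t ^ 4) := by
    rw [hv₁, hH', hHx, hat2, hat4]; field_simp; ring
  obtain ⟨hfried, hraych⟩ := einstein_equations_of_field_equations (k := 1) (D := D) (a := a t)
    (ψ := deriv φ₁ t ^ 2) (v := v₁ t) 4 hK.ne' hacc
    (by rw [h34]; push_cast; ring) (by rw [h35]; push_cast; ring)
  refine ⟨h34, h35, ?_, ?_⟩
  · rw [hρ]; simpa using hfried
  · rw [hρ, hp]; convert hraych using 4; norm_num
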